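/- Let C be a commutative star ring in which 2 is invertible, A a unital *-algebra over C, and qA = (A[[λ]], ⋆) a Hermitian formal deformation of A. Then every projection P_0 ∈ M_n(A) (i.e. P_0² = P_0 and P_0* = P_0) can be deformed into a projection of the deformed matrix algebra: there exist P_r ∈ M_n(A) for r ≥ 1 such that P = P_0 + Σ_{r≥1} P_r λ^r ∈ M_n(A)[[λ]] satisfies P ⋆ P = P and P* = P. -/

import Mathlib

open scoped Matrix

/-- Cauchy-type convolution of two formal series along a family of
coefficient maps `B r : M → N → P`:  `(x ⋆ y) n = ∑_{r+i+j=n} B r (x i) (y j)`. -/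
def fdConv {M N P : Type*} [AddCommMonoid P] (B : ℕ → M → N → P)
    (x : ℕ → M) (y : ℕ → N) : ℕ → P := fun n =>
  ∑ p ∈ Finset.HasAntidiagonal.antidiagonal n, ∑ q ∈ Finset.HasAntidiagonal.antidiagonal p.2, B p.1 (x q.1) (y q.2)

/-- The unit formal series `1 + 0·λ + 0·λ² + ⋯`. -/
def fdOne (A : Type*) [One A] [Zero A] : ℕ → A := fun n => if n = 0 then 1 else 0

/-- An element viewed as a constant (order-zero) formal series. -/
def fdC {A : Type*} [Zero A] (a : A) : ℕ → A := fun n => if n = 0 then a else 0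

/-- Coefficientwise star of a formal series. -/
def fdStar {A : Type*} [Star A] (x : ℕ → A) : ℕ → A := fun n => star (x n)

/-- Action of a scalar series `c ∈ k[[λ]]` on series with coefficients in a `k`-module. -/
def fdSmul {k M : Type*} [Semiring k] [AddCommMonoid M] [Module k M]
    (c : ℕ → k) (x : ℕ → M) : ℕ → M := fun n =>
  ∑ p ∈ Finset.HasAntidiagonal.antidiagonal n, c p.1 • x p.2

/-- Order-by-order extension of a family of maps `T r : E → F` to formal series:
`(T x) n = ∑_{r+j=n} T r (x j)`. -/
def fdMap {E F : Type*} [AddCommMonoid F] (T : ℕ → E → F) (x : ℕ → E) : ℕ → F :=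
  fun n => ∑ p ∈ Finset.HasAntidiagonal.antidiagonal n, T p.1 (x p.2)

/-- A formal deformation (à la Gerstenhaber) of a unital `k`-algebra `A`:
a family of `k`-bilinear cochains `C r` with `C 0` the original product, whose
convolution product on `A[[λ]]` is associative and unital (with the same unit). -/
structure FormalDeformation (k A : Type*) [CommRing k] [Ring A] [Algebra k A] where
  C : ℕ → A →ₗ[k] A →ₗ[k] A
  C_zero : ∀ a b : A, C 0 a b = a * b
  assoc : ∀ x y z : ℕ → A,
    fdConv (fun r a b => C r a b) (fdConv (fun r a b => C r a b) x y) z =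
      fdConv (fun r a b => C r a b) x (fdConv (fun r a b => C r a b) y z)
  one_mul : ∀ x : ℕ → A, fdConv (fun r a b => C r a b) (fdOne A) x = x
  mul_one : ∀ x : ℕ → A, fdConv (fun r a b => C r a b) x (fdOne A) = x

namespace FormalDeformation

variable {k A : Type*} [CommRing k] [Ring A] [Algebra k A]

/-- The deformed product on `A[[λ]]`. -/
def mul (D : FormalDeformation k A) : (ℕ → A) → (ℕ → A) → ℕ → A :=
  fdConv fun r a b => D.C r a b

/-- A deformation of a `*`-algebra is Hermitian if the coefficientwise extension of
the involution is still an involution for the deformed product. -/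
def IsHermitian [StarRing A] (D : FormalDeformation k A) : Prop :=
  ∀ x y : ℕ → A, fdStar (D.mul x y) = D.mul (fdStar y) (fdStar x)

/-- The extension of the deformation cochains to matrices. -/
def matC (D : FormalDeformation k A) (n : ℕ) (r : ℕ)
    (L S : Matrix (Fin n) (Fin n) A) : Matrix (Fin n) (Fin n) A :=
  Matrix.of fun i j => ∑ s, D.C r (L i s) (S s j)

/-- The deformed product on `M_n(A)[[λ]] = M_n(A[[λ]])`. -/
def matMul (D : FormalDeformation k A) (n : ℕ) :
    (ℕ → Matrix (Fin n) (Fin n) A) → (ℕ → Matrix (Fin n) (Fin n) A) →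
      ℕ → Matrix (Fin n) (Fin n) A :=
  fdConv (D.matC n)

/-- The deformed left action of `M_n(A)[[λ]]` on column vectors `A^n[[λ]]`. -/
def mvMul (D : FormalDeformation k A) (n : ℕ) :
    (ℕ → Matrix (Fin n) (Fin n) A) → (ℕ → Fin n → A) → ℕ → Fin n → A :=
  fdConv fun r L v => fun i => ∑ j, D.C r (L i j) (v j)

/-- The deformed right action of `A[[λ]]` on column vectors `A^n[[λ]]`. -/
def vsMul (D : FormalDeformation k A) (n : ℕ) :
    (ℕ → Fin n → A) → (ℕ → A) → ℕ → Fin n → A :=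
  fdConv fun r v a => fun i => D.C r (v i) a

end FormalDeformation

/-!
The projection is built order by order. Suppose `Q = P₀ + ⋯ + P_m λ^m` satisfies
`Q ⋆ Q ≡ Q mod λ^{m+1}` and let `E` be the coefficient of `λ^{m+1}` in `Q ⋆ Q`. Reading the
associativity `(Q ⋆ Q) ⋆ Q = Q ⋆ (Q ⋆ Q)` at order `m + 1` shows that `E` commutes with `P₀`;
then `P_{m+1} = (1 - 2P₀)E` solves `P_{m+1} - P₀P_{m+1} - P_{m+1}P₀ = E`, which is exactly what
makes `Q + P_{m+1}λ^{m+1}` idempotent modulo `λ^{m+2}`. If the deformation is Hermitian, `E` is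
Hermitian whenever `Q` is, hence so is `P_{m+1}`. Associativity of `⋆` on matrices comes from
identifying `Mₙ(A)[[λ]]` with `Mₙ(qA)`.
-/

open Finset

section fdConv

variable {M N P : Type*} [AddCommMonoid P] (B : ℕ → M → N → P)

lemma fdConv_apply_congr {x x' : ℕ → M} {y y' : ℕ → N} {m : ℕ}
    (hx : ∀ i ≤ m, x i = x' i) (hy : ∀ i ≤ m, y i = y' i) :
    fdConv B x y m = fdConv B x' y' m := by
  refine sum_congr rfl fun p hp => sum_congr rfl fun q hq => ?_
  have hp' := HasAntidiagonal.mem_antidiagonal.mp hp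
  have hq' := HasAntidiagonal.mem_antidiagonal.mp hq
  rw [hx q.1 (by omega), hy q.2 (by omega)]

lemma fdConv_apply_eq_term {x : ℕ → M} {y : ℕ → N} {m : ℕ} (r i j : ℕ) (hm : r + i + j = m)
    (h : ∀ r' i' j', r' + i' + j' = m → (r', i', j') ≠ (r, i, j) → B r' (x i') (y j') = 0) :
    fdConv B x y m = B r (x i) (y j) := by
  have mem {s a b : ℕ} : (a, b) ∈ HasAntidiagonal.antidiagonal s ↔ a + b = s :=
    HasAntidiagonal.mem_antidiagonal
  rw [fdConv, sum_eq_single (r, i + j), sum_eq_single (i, j)]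
  · rintro ⟨i', j'⟩ hq hne
    exact h r i' j' (by rw [mem] at hq; omega) (by simpa using hne)
  · exact fun hq => absurd (mem.mpr rfl) hq
  · rintro ⟨r', s⟩ hp hne
    refine sum_eq_zero fun ⟨i', j'⟩ hq => h r' i' j' ?_ ?_
    · rw [mem] at hp hq; omega
    · rintro ⟨⟩
      rw [mem] at hq
      exact hne (by rw [hq])
  · exact fun hp => absurd (mem.mpr (by omega)) hp

lemma fdConv_flip (x : ℕ → M) (y : ℕ → N) :
    fdConv (fun r b a => B r a b) y x = fdConv B x y := by
  funext m
  exact sum_congr rfl fun p _ => Nat.sum_antidiagonal_swap (f := fun q => B p.1 (x q.1) (y q.2))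

lemma fdConv_add_left [Add M] (hB : ∀ r a a' b, B r (a + a') b = B r a b + B r a' b)
    (x x' : ℕ → M) (y : ℕ → N) : fdConv B (x + x') y = fdConv B x y + fdConv B x' y := by
  funext m
  simp only [fdConv, Pi.add_apply, hB, sum_add_distrib]

lemma fdConv_add_right [Add N] (hB : ∀ r a b b', B r a (b + b') = B r a b + B r a b')
    (x : ℕ → M) (y y' : ℕ → N) : fdConv B x (y + y') = fdConv B x y + fdConv B x y' := by
  funext m
  simp only [fdConv, Pi.add_apply, hB, sum_add_distrib]

lemma fdConv_zero_left [Zero M] (hB : ∀ r b, B r 0 b = 0) (y : ℕ → N) : fdConv B 0 y = 0 := by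
  funext m
  simp [fdConv, hB]

lemma fdConv_zero_right [Zero N] (hB : ∀ r a, B r a 0 = 0) (x : ℕ → M) : fdConv B x 0 = 0 := by
  funext m
  simp [fdConv, hB]

end fdConv

lemma fdStar_fdC {A : Type*} [AddMonoid A] [StarAddMonoid A] (a : A) :
    fdStar (fdC a) = fdC (star a) := by
  funext m
  by_cases h : m = 0 <;> simp [fdStar, fdC, h]

lemma IsIdempotentElem.eq_add_mul_add_mul_of_commute {R : Type*} [Ring R] {p : R}
    (hp : IsIdempotentElem p) {e : R} (hpe : Commute p e) :
    (1 - 2 * p) * e = e + p * ((1 - 2 * p) * e) + (1 - 2 * p) * e * p := by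
  have hpep : p * e * p = p * e := by rw [mul_assoc, ← hpe.eq, ← mul_assoc, hp.eq]
  simp only [mul_sub, sub_mul, mul_add, ← mul_assoc, one_mul, hp.eq, hpep,
    two_mul, add_mul, mul_add]
  rw [← hpe.eq]
  abel

namespace FormalDeformation

variable {k A : Type*} [CommRing k] [Ring A] [Algebra k A] (D : FormalDeformation k A)

/-- `A[[λ]]` with the deformed product, i.e. the ring `qA`. -/
def DeformedAlgebra (_D : FormalDeformation k A) : Type _ := ℕ → A

instance : AddCommGroup D.DeformedAlgebra := Pi.addCommGroup

instance : Ring D.DeformedAlgebra :=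
  { (inferInstance : AddCommGroup D.DeformedAlgebra) with
    mul := D.mul
    one := fdOne A
    mul_assoc := D.assoc
    one_mul := D.one_mul
    mul_one := D.mul_one
    left_distrib := fun x y z =>
      fdConv_add_right (fun r a b => D.C r a b) (fun _ _ _ _ => map_add _ _ _) x y z
    right_distrib := fun x y z =>
      fdConv_add_left (fun r a b => D.C r a b) (fun _ _ _ _ => LinearMap.map_add₂ _ _ _ _) x y z
    zero_mul := fdConv_zero_left (fun r a b => D.C r a b) fun _ _ => LinearMap.map_zero₂ _ _
    mul_zero := fdConv_zero_right (fun r a b => D.C r a b) fun _ _ => map_zero _ }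

variable {n : ℕ}

def toMatrix (x : ℕ → Matrix (Fin n) (Fin n) A) : Matrix (Fin n) (Fin n) D.DeformedAlgebra :=
  Matrix.of fun i j m => x m i j

lemma toMatrix_injective : Function.Injective (D.toMatrix (n := n)) :=
  fun _ _ h => funext fun m => Matrix.ext fun i j => congrFun (congrFun (congrFun h i) j) m

lemma toMatrix_matMul (x y : ℕ → Matrix (Fin n) (Fin n) A) :
    D.toMatrix (D.matMul n x y) = D.toMatrix x * D.toMatrix y := by
  ext i j
  funext m
  change (fdConv (D.matC n) x y m) i j = (∑ s, D.mul (fun m => x m i s) (fun m => y m s j)) m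
  simp only [fdConv, matC, Matrix.sum_apply, Matrix.of_apply, mul, Finset.sum_apply]
  rw [sum_comm]
  exact sum_congr rfl fun _ _ => sum_comm

lemma matMul_assoc (x y z : ℕ → Matrix (Fin n) (Fin n) A) :
    D.matMul n (D.matMul n x y) z = D.matMul n x (D.matMul n y z) :=
  D.toMatrix_injective <| by simp only [toMatrix_matMul, mul_assoc]

lemma matC_add_left (r : ℕ) (L L' S : Matrix (Fin n) (Fin n) A) :
    D.matC n r (L + L') S = D.matC n r L S + D.matC n r L' S := by
  ext i j
  simp [matC, sum_add_distrib]

lemma matC_add_right (r : ℕ) (L S S' : Matrix (Fin n) (Fin n) A) :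
    D.matC n r L (S + S') = D.matC n r L S + D.matC n r L S' := by
  ext i j
  simp [matC, sum_add_distrib]

lemma matC_zero_left (r : ℕ) (S : Matrix (Fin n) (Fin n) A) : D.matC n r 0 S = 0 := by
  ext i j
  simp [matC]

lemma matC_zero_right (r : ℕ) (L : Matrix (Fin n) (Fin n) A) : D.matC n r L 0 = 0 := by
  ext i j
  simp [matC]

lemma matC_zero (L S : Matrix (Fin n) (Fin n) A) : D.matC n 0 L S = L * S := by
  ext i j
  simp [matC, C_zero, Matrix.mul_apply]

lemma matMul_add_left (x x' y : ℕ → Matrix (Fin n) (Fin n) A) :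
    D.matMul n (x + x') y = D.matMul n x y + D.matMul n x' y :=
  fdConv_add_left _ (fun r _ _ _ => D.matC_add_left r _ _ _) x x' y

lemma matMul_add_right (x y y' : ℕ → Matrix (Fin n) (Fin n) A) :
    D.matMul n x (y + y') = D.matMul n x y + D.matMul n x y' :=
  fdConv_add_right _ (fun r _ _ _ => D.matC_add_right r _ _ _) x y y'

lemma matMul_apply_congr {x x' y y' : ℕ → Matrix (Fin n) (Fin n) A} {m : ℕ}
    (hx : ∀ i ≤ m, x i = x' i) (hy : ∀ i ≤ m, y i = y' i) :
    D.matMul n x y m = D.matMul n x' y' m :=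
  fdConv_apply_congr _ hx hy

lemma matMul_apply_zero (x y : ℕ → Matrix (Fin n) (Fin n) A) :
    D.matMul n x y 0 = x 0 * y 0 := by
  refine (fdConv_apply_eq_term _ 0 0 0 rfl fun r i j h hne => ?_).trans (D.matC_zero _ _)
  obtain ⟨rfl, rfl, rfl⟩ : r = 0 ∧ i = 0 ∧ j = 0 := by omega
  exact absurd rfl hne

lemma matMul_single_left_apply_self (d : ℕ) (X : Matrix (Fin n) (Fin n) A)
    (y : ℕ → Matrix (Fin n) (Fin n) A) : D.matMul n (Pi.single d X) y d = X * y 0 := by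
  refine (fdConv_apply_eq_term _ 0 d 0 (by simp) fun r i j h hne => ?_).trans ?_
  · obtain rfl | hi := eq_or_ne i d
    · obtain ⟨rfl, rfl⟩ : r = 0 ∧ j = 0 := by omega
      exact absurd rfl hne
    · rw [Pi.single_eq_of_ne hi, matC_zero_left]
  · rw [Pi.single_eq_same, matC_zero]

lemma matMul_single_right_apply_self (d : ℕ) (x : ℕ → Matrix (Fin n) (Fin n) A)
    (Y : Matrix (Fin n) (Fin n) A) : D.matMul n x (Pi.single d Y) d = x 0 * Y := by
  refine (fdConv_apply_eq_term _ 0 0 d (by simp) fun r i j h hne => ?_).trans ?_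
  · obtain rfl | hj := eq_or_ne j d
    · obtain ⟨rfl, rfl⟩ : r = 0 ∧ i = 0 := by omega
      exact absurd rfl hne
    · rw [Pi.single_eq_of_ne hj, matC_zero_right]
  · rw [Pi.single_eq_same, matC_zero]

lemma matMul_add_single_left_apply_self (d : ℕ) (x y : ℕ → Matrix (Fin n) (Fin n) A)
    (X : Matrix (Fin n) (Fin n) A) :
    D.matMul n (x + Pi.single d X) y d = D.matMul n x y d + X * y 0 := by
  rw [matMul_add_left, Pi.add_apply, matMul_single_left_apply_self]

lemma matMul_add_single_right_apply_self (d : ℕ) (x y : ℕ → Matrix (Fin n) (Fin n) A)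
    (Y : Matrix (Fin n) (Fin n) A) :
    D.matMul n x (y + Pi.single d Y) d = D.matMul n x y d + x 0 * Y := by
  rw [matMul_add_right, Pi.add_apply, matMul_single_right_apply_self]

lemma matMul_add_single_add_single_apply_self {d : ℕ} (hd : d ≠ 0)
    (x y : ℕ → Matrix (Fin n) (Fin n) A) (X Y : Matrix (Fin n) (Fin n) A) :
    D.matMul n (x + Pi.single d X) (y + Pi.single d Y) d =
      D.matMul n x y d + x 0 * Y + X * y 0 := by
  rw [matMul_add_single_left_apply_self, matMul_add_single_right_apply_self, Pi.add_apply,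
    Pi.single_eq_of_ne hd.symm, add_zero]

lemma mul_fdC_fdC (a b : A) (r : ℕ) : D.mul (fdC a) (fdC b) r = D.C r a b := by
  refine fdConv_apply_eq_term _ r 0 0 (by simp) fun r' i j h hne => ?_
  obtain rfl | hi := eq_or_ne i 0
  · obtain rfl | hj := eq_or_ne j 0
    · exact absurd (by simp_all) hne
    · simp [fdC, hj]
  · simp [fdC, hi]

section Hermitian

variable [StarRing A] {D}

lemma IsHermitian.star_C (hD : D.IsHermitian) (r : ℕ) (a b : A) :
    star (D.C r a b) = D.C r (star b) (star a) := by
  simpa only [fdStar, fdStar_fdC, mul_fdC_fdC] using congrFun (hD (fdC a) (fdC b)) r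

lemma IsHermitian.conjTranspose_matC (hD : D.IsHermitian) (r : ℕ)
    (L S : Matrix (Fin n) (Fin n) A) : (D.matC n r L S)ᴴ = D.matC n r Sᴴ Lᴴ := by
  ext i j
  simp [matC, Matrix.conjTranspose_apply, star_sum, hD.star_C]

lemma IsHermitian.conjTranspose_matMul_apply (hD : D.IsHermitian)
    (x y : ℕ → Matrix (Fin n) (Fin n) A) (m : ℕ) :
    (D.matMul n x y m)ᴴ = D.matMul n (fun i => (y i)ᴴ) (fun i => (x i)ᴴ) m :=
  calc (D.matMul n x y m)ᴴ = fdConv (fun r a b => D.matC n r bᴴ aᴴ) x y m := by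
        simp only [matMul, fdConv, Matrix.conjTranspose_sum, hD.conjTranspose_matC]
    _ = _ := congrFun (fdConv_flip _ x y).symm m

end Hermitian

def projStep (m : ℕ) (Q : ℕ → Matrix (Fin n) (Fin n) A) : ℕ → Matrix (Fin n) (Fin n) A :=
  Q + Pi.single (m + 1) ((1 - 2 * Q 0) * D.matMul n Q Q (m + 1) : Matrix (Fin n) (Fin n) A)

variable {D}

lemma commute_matMul_self_apply_succ {m : ℕ} {Q : ℕ → Matrix (Fin n) (Fin n) A}
    (hQ : ∀ j ≤ m, D.matMul n Q Q j = Q j) (hQm : Q (m + 1) = 0) :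
    Commute (Q 0) (D.matMul n Q Q (m + 1)) := by
  set E := D.matMul n Q Q (m + 1)
  have hW : ∀ j ≤ m + 1,
      D.matMul n Q Q j = (Q + Pi.single (m + 1) E : ℕ → Matrix (Fin n) (Fin n) A) j := by
    intro j hj
    rcases hj.lt_or_eq with hj | rfl
    · rw [hQ j (by omega), Pi.add_apply, Pi.single_eq_of_ne hj.ne, add_zero]
    · rw [Pi.add_apply, hQm, Pi.single_eq_same, zero_add]
  have h := congrFun (D.matMul_assoc Q Q Q) (m + 1)
  rw [D.matMul_apply_congr hW (fun _ _ => rfl), D.matMul_apply_congr (fun _ _ => rfl) hW,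
    matMul_add_single_left_apply_self, matMul_add_single_right_apply_self] at h
  exact (add_left_cancel h).symm

lemma projStep_apply_of_ne {m j : ℕ} (hj : j ≠ m + 1) (Q : ℕ → Matrix (Fin n) (Fin n) A) :
    D.projStep m Q j = Q j := by
  rw [projStep, Pi.add_apply, Pi.single_eq_of_ne hj, add_zero]

lemma matMul_projStep_apply {m : ℕ} {Q : ℕ → Matrix (Fin n) (Fin n) A}
    (hQ : ∀ j ≤ m, D.matMul n Q Q j = Q j) (hQm : Q (m + 1) = 0) :
    ∀ j ≤ m + 1, D.matMul n (D.projStep m Q) (D.projStep m Q) j = D.projStep m Q j := by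
  intro j hj
  rcases hj.lt_or_eq with hj | rfl
  · have hagree (i) (hi : i ≤ j) := projStep_apply_of_ne (D := D) (by omega : i ≠ m + 1) Q
    rw [D.matMul_apply_congr hagree hagree, hQ j (by omega), projStep_apply_of_ne (by omega)]
  · have hidem : IsIdempotentElem (Q 0) := by
      simpa only [IsIdempotentElem, matMul_apply_zero] using hQ 0 (Nat.zero_le m)
    rw [projStep, D.matMul_add_single_add_single_apply_self m.add_one_ne_zero, Pi.add_apply, hQm,
      Pi.single_eq_same, zero_add]
    exact .symm <| hidem.eq_add_mul_add_mul_of_commute (commute_matMul_self_apply_succ hQ hQm)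

lemma conjTranspose_projStep_apply [StarRing A] (hD : D.IsHermitian) {m : ℕ}
    {Q : ℕ → Matrix (Fin n) (Fin n) A} (hQ : ∀ j ≤ m, D.matMul n Q Q j = Q j)
    (hQm : Q (m + 1) = 0) (hQherm : ∀ j, (Q j)ᴴ = Q j) (j : ℕ) :
    (D.projStep m Q j)ᴴ = D.projStep m Q j := by
  have hEherm : (D.matMul n Q Q (m + 1))ᴴ = D.matMul n Q Q (m + 1) := by
    simp only [hD.conjTranspose_matMul_apply, hQherm]
  have hc := commute_matMul_self_apply_succ hQ hQm
  rw [projStep, Pi.add_apply, Matrix.conjTranspose_add, hQherm]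
  congr 1
  obtain rfl | hj := eq_or_ne j (m + 1)
  · rw [Pi.single_eq_same, Matrix.conjTranspose_mul, Matrix.conjTranspose_sub,
      Matrix.conjTranspose_mul, Matrix.conjTranspose_one, Matrix.conjTranspose_ofNat, hEherm,
      hQherm, ← (Commute.ofNat_left 2 (Q 0)).eq]
    exact ((Commute.one_left _).sub_left ((Commute.ofNat_left 2 _).mul_left hc)).symm.eq
  · rw [Pi.single_eq_of_ne hj, Matrix.conjTranspose_zero]

def projApprox (P₀ : Matrix (Fin n) (Fin n) A) : ℕ → ℕ → Matrix (Fin n) (Fin n) A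
  | 0 => Pi.single 0 P₀
  | m + 1 => D.projStep m (projApprox P₀ m)

variable {P₀ : Matrix (Fin n) (Fin n) A}

lemma projApprox_apply_of_lt {m j : ℕ} (h : m < j) : D.projApprox P₀ m j = 0 := by
  induction m with
  | zero => exact Pi.single_eq_of_ne (by omega) _
  | succ m ih => rw [projApprox, projStep_apply_of_ne (by omega) _, ih (by omega)]

lemma projApprox_apply_of_le {m M j : ℕ} (hmM : m ≤ M) (hj : j ≤ m) :
    D.projApprox P₀ M j = D.projApprox P₀ m j := by
  induction M, hmM using Nat.le_induction with
  | base => rfl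
  | succ M hmM ih => rw [projApprox, projStep_apply_of_ne (by omega), ih]

lemma projApprox_apply_zero (m : ℕ) : D.projApprox P₀ m 0 = P₀ :=
  projApprox_apply_of_le m.zero_le le_rfl

lemma matMul_projApprox_apply (hP₀ : IsIdempotentElem P₀) :
    ∀ m, ∀ j ≤ m, D.matMul n (D.projApprox P₀ m) (D.projApprox P₀ m) j = D.projApprox P₀ m j
  | 0, _, hj => by
    rw [Nat.le_zero.mp hj, matMul_apply_zero, projApprox_apply_zero, hP₀.eq]
  | m + 1, _, hj => matMul_projStep_apply (matMul_projApprox_apply hP₀ m)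
      (projApprox_apply_of_lt m.lt_add_one) _ hj

lemma conjTranspose_projApprox_apply [StarRing A] (hD : D.IsHermitian)
    (hP₀ : IsIdempotentElem P₀) (hP₀herm : P₀ᴴ = P₀) :
    ∀ m j, (D.projApprox P₀ m j)ᴴ = D.projApprox P₀ m j
  | 0, j => by
    obtain rfl | hj := eq_or_ne j 0
    · rw [projApprox, Pi.single_eq_same, hP₀herm]
    · rw [projApprox, Pi.single_eq_of_ne hj, Matrix.conjTranspose_zero]
  | m + 1, j => conjTranspose_projStep_apply hD (matMul_projApprox_apply hP₀ m)
      (projApprox_apply_of_lt m.lt_add_one) (conjTranspose_projApprox_apply hD hP₀ hP₀herm m) j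

end FormalDeformation

theorem projection_deformation_general {C A : Type*} [CommRing C] [Ring A] [Algebra C A] [StarRing A]
    (D : FormalDeformation C A) (hD : D.IsHermitian) (n : ℕ)
    (P₀ : Matrix (Fin n) (Fin n) A)
    (hP₀idem : P₀ * P₀ = P₀) (hP₀herm : P₀ᴴ = P₀) :
    ∃ P : ℕ → Matrix (Fin n) (Fin n) A, P 0 = P₀ ∧
      D.matMul n P P = P ∧ ∀ m, (P m)ᴴ = P m := by
  refine ⟨fun m => D.projApprox P₀ m m, FormalDeformation.projApprox_apply_zero 0,
    funext fun j => ?_,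
    fun m => FormalDeformation.conjTranspose_projApprox_apply hD hP₀idem hP₀herm m m⟩
  have hagree (i : ℕ) (hi : i ≤ j) : D.projApprox P₀ i i = D.projApprox P₀ j i :=
    (FormalDeformation.projApprox_apply_of_le hi le_rfl).symm
  rw [D.matMul_apply_congr hagree hagree]
  exact FormalDeformation.matMul_projApprox_apply hP₀idem j j le_rfl

/-- Every projection (Hermitian idempotent) `P₀ ∈ Mₙ(A)` can be
deformed into a projection of the deformed matrix algebra `Mₙ(qA)`. -/
theorem projection_deformation {C A : Type*} [CommRing C] [StarRing C]
    [Invertible (2 : C)] [Ring A] [Algebra C A] [StarRing A] [StarModule C A]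
    (D : FormalDeformation C A) (hD : D.IsHermitian) (n : ℕ)
    (P₀ : Matrix (Fin n) (Fin n) A)
    (hP₀idem : P₀ * P₀ = P₀) (hP₀herm : P₀ᴴ = P₀) :
    ∃ P : ℕ → Matrix (Fin n) (Fin n) A, P 0 = P₀ ∧
      D.matMul n P P = P ∧ ∀ m, (P m)ᴴ = P m :=
  projection_deformation_general D hD n P₀ hP₀idem hP₀herm
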